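/- arXiv:1701.09060 — 5 statements merged into one kernel-verified Lean document; each statement's English description precedes it below -/
import Mathlib

section
/- For every automatic description mode R there exists c > 0 such that K_R(1^n) ≥ n/c − 1 for all n. Consequently there is no optimal automatic description mode: no mode R satisfies K_R(x) ≤ K_{R'}(x) + O(1) for all automatic description modes R'. -/
/-- A finite automaton: a finite directed graph whose edges are labeled by pairs
of an optional input letter and an optional output letter (`none` = ε). -/
structure Automaton (A B : Type*) where
  n : ℕ
  edges : List (Fin n × (Option A × Option B) × Fin n)

namespace Automaton

/-- `Reads G s t u v` : along some directed path from `s` to `t` one reads the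
pair of strings `(u, v)` (concatenating labels, ε contributing nothing). -/
inductive Reads {A B : Type*} (G : Automaton A B) :
    Fin G.n → Fin G.n → List A → List B → Prop
  | nil (s : Fin G.n) : Reads G s s [] []
  | step {s t r : Fin G.n} {a : Option A} {b : Option B} {u : List A} {v : List B} :
      (s, (a, b), t) ∈ G.edges → Reads G t r u v →
      Reads G s r (a.toList ++ u) (b.toList ++ v)

/-- The relation realized by the automaton: pairs readable along some directed
path, with arbitrary start and end states. -/
def Rel {A B : Type*} (G : Automaton A B) (u : List A) (v : List B) : Prop :=
  ∃ s t : Fin G.n, G.Reads s t u v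

end Automaton

/-- A relation is automatic if it is realized by some automaton. -/
def IsAutomatic {A B : Type*} (R : List A → List B → Prop) : Prop :=
  ∃ G : Automaton A B, ∀ u v, R u v ↔ G.Rel u v

/-- `R` is O(1)-valued: some constant bounds the number of strings related to any `p`. -/
def BoundedValued {A B : Type*} (R : List A → List B → Prop) : Prop :=
  ∃ c : ℕ, ∀ p, {x | R p x}.Finite ∧ {x | R p x}.ncard ≤ c

/-- An automatic description mode: an O(1)-valued automatic relation on binary strings. -/
def IsDescriptionMode (R : List Bool → List Bool → Prop) : Prop :=
  IsAutomatic R ∧ BoundedValued R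

/-- Automatic Kolmogorov complexity: minimal length of a description of `x`
(`⊤` if there is none). -/
noncomputable def autK (R : List Bool → List Bool → Prop) (x : List Bool) : ℕ∞ :=
  sInf {n : ℕ∞ | ∃ p : List Bool, R p x ∧ n = p.length}

/-! If a path reading `p` emits more than `(|Q| + 1) (|p| + 1)` letters, then before one of the
input letters (or after the last one) it emits more than `|Q|` letters on ε-input edges, so it
passes twice through the same state in between: a loop with empty input and nonempty output.
Pumping that loop yields infinitely many outputs for `p`, which an O(1)-valued relation forbids.
Hence `|x| < (|Q| + 1) (K_R(x) + 1)` for every automatic description mode `R`.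

A cycle of `m + 1` states that reads one input letter per turn describes `1ⁿ` with `n / (m + 1)`
letters; taking `m + 1 = 2c` beats the bound `n / c - 1` of any mode by more than any constant. -/

namespace Automaton

variable {A B : Type*} {G : Automaton A B}

theorem Reads.single {s t : Fin G.n} {a : Option A} {b : Option B}
    (e : (s, (a, b), t) ∈ G.edges) : G.Reads s t a.toList b.toList := by
  simpa using Reads.step e (Reads.nil t)

theorem Reads.trans {s m t : Fin G.n} {u₁ u₂ : List A} {v₁ v₂ : List B}
    (h₁ : G.Reads s m u₁ v₁) (h₂ : G.Reads m t u₂ v₂) :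
    G.Reads s t (u₁ ++ u₂) (v₁ ++ v₂) := by
  induction h₁ with
  | nil => simpa
  | step e _ ih => simpa [List.append_assoc] using Reads.step e (ih h₂)

/-- `S` collects the sources of the output-emitting edges taken before the first input letter
is read: if one of them is visited twice, the path contains a loop with empty input and nonempty
output, which can be repeated. -/
theorem Reads.exists_longer_or_length_le {s t : Fin G.n} {u : List A} {v : List B}
    (h : G.Reads s t u v) :
    (∃ v', v.length < v'.length ∧ G.Reads s t u v') ∨
      ∃ S : Finset (Fin G.n), (∀ q ∈ S, ∃ w, G.Reads s q [] w) ∧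
        v.length ≤ S.card + (G.n + 1) * u.length := by
  induction h with
  | nil s => exact Or.inr ⟨∅, by simp, by simp⟩
  | @step s t r a b u v e htail ih =>
    rcases ih with ⟨v', hlt, hv'⟩ | ⟨S, hS, hlen⟩
    · exact Or.inl ⟨b.toList ++ v', by simpa using hlt, Reads.step e hv'⟩
    have hcard : S.card ≤ G.n := by simpa using S.card_le_univ
    cases a with
    | some x =>
      refine Or.inr ⟨∅, by simp, ?_⟩
      cases b <;>
        simp only [Option.toList_none, Option.toList_some, List.nil_append, List.cons_append,
          List.length_cons, Finset.card_empty, zero_add] <;>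
        nlinarith
    | none =>
      cases b with
      | none =>
        refine Or.inr ⟨S, fun q hq => ?_, by simpa using hlen⟩
        obtain ⟨w, hw⟩ := hS q hq
        exact ⟨w, by simpa using Reads.step e hw⟩
      | some y =>
        by_cases hs : s ∈ S
        · obtain ⟨w, hw⟩ := hS s hs
          have loop : G.Reads s s [] (y :: w) := by simpa using Reads.step e hw
          exact Or.inl ⟨y :: w ++ y :: v, by simp, by simpa using loop.trans (Reads.step e htail)⟩
        · refine Or.inr ⟨insert s S, fun q hq => ?_, ?_⟩
          · rcases Finset.mem_insert.mp hq with rfl | hq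
            · exact ⟨[], Reads.nil q⟩
            · obtain ⟨w, hw⟩ := hS q hq
              exact ⟨y :: w, by simpa using Reads.step e hw⟩
          · simp only [Option.toList_none, Option.toList_some, List.nil_append, List.cons_append,
              List.length_cons, Finset.card_insert_of_notMem hs]
            omega

theorem Reads.exists_longer {s t : Fin G.n} {u : List A} {v : List B}
    (h : G.Reads s t u v) (hv : (G.n + 1) * (u.length + 1) ≤ v.length) :
    ∃ v', v.length < v'.length ∧ G.Reads s t u v' := by
  refine h.exists_longer_or_length_le.resolve_right ?_
  rintro ⟨S, -, hlen⟩
  have hcard : S.card ≤ G.n := by simpa using S.card_le_univ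
  nlinarith

theorem Reads.exists_length_ge {s t : Fin G.n} {u : List A} {v : List B}
    (h : G.Reads s t u v) (hv : (G.n + 1) * (u.length + 1) ≤ v.length) (k : ℕ) :
    ∃ v', v.length + k ≤ v'.length ∧ G.Reads s t u v' := by
  induction k with
  | zero => exact ⟨v, le_rfl, h⟩
  | succ k ih =>
    obtain ⟨v', hk, hv'⟩ := ih
    obtain ⟨v'', hlt, hv''⟩ := hv'.exists_longer (hv.trans (by omega))
    exact ⟨v'', by omega, hv''⟩

theorem length_lt_of_rel {u : List A} {v : List B} (hfin : {v | G.Rel u v}.Finite)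
    (h : G.Rel u v) : v.length < (G.n + 1) * (u.length + 1) := by
  by_contra! hv
  obtain ⟨s, t, h⟩ := h
  obtain ⟨N, hN⟩ := (hfin.image List.length).bddAbove
  obtain ⟨v', hlen, hv'⟩ := h.exists_length_ge hv (N + 1)
  have : v'.length ≤ N := hN ⟨v', ⟨s, t, hv'⟩, rfl⟩
  omega

end Automaton

theorem exists_length_eq_autK {R : List Bool → List Bool → Prop} {x : List Bool}
    (h : autK R x ≠ ⊤) : ∃ p, R p x ∧ (p.length : ℕ∞) = autK R x := by
  have hne : {n : ℕ∞ | ∃ p : List Bool, R p x ∧ n = p.length}.Nonempty := by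
    by_contra hempty
    exact h (by rw [autK, Set.not_nonempty_iff_eq_empty.mp hempty, sInf_empty])
  obtain ⟨p, hp, heq⟩ := csInf_mem hne
  exact ⟨p, hp, heq.symm⟩

theorem IsDescriptionMode.length_le_mul_autK_add_one {R : List Bool → List Bool → Prop}
    (hR : IsDescriptionMode R) :
    ∃ c : ℕ, 0 < c ∧ ∀ x : List Bool, (x.length : ℕ∞) ≤ c * (autK R x + 1) := by
  obtain ⟨⟨G, hG⟩, _, hfin⟩ := hR
  obtain rfl : R = G.Rel := funext fun u => funext fun v => propext (hG u v)
  refine ⟨G.n + 1, G.n.succ_pos, fun x => ?_⟩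
  by_cases htop : autK G.Rel x = ⊤
  · simp [htop]
  obtain ⟨p, hp, hlen⟩ := exists_length_eq_autK htop
  rw [← hlen]
  exact_mod_cast (Automaton.length_lt_of_rel (hfin p).1 hp).le

/-- A cycle through the states `0, …, m` that emits `true` on every edge and reads `false`
exactly on the edge `m → 0`, so it spells `1ⁿ` from an input of length about `n / (m + 1)`. -/
def onesCycle (m : ℕ) : Automaton Bool Bool where
  n := m + 1
  edges := (List.finRange (m + 1)).map fun i =>
    (i, (if i = Fin.last m then some false else none, some true), i + 1)

theorem onesCycle_edge (m : ℕ) (i : Fin (m + 1)) :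
    (i, (if i = Fin.last m then some false else none, some true), i + 1) ∈ (onesCycle m).edges :=
  List.mem_map.mpr ⟨i, List.mem_finRange i, rfl⟩

theorem onesCycle_reads {m : ℕ} {s t : Fin (onesCycle m).n} {u v : List Bool}
    (h : (onesCycle m).Reads s t u v) :
    v = List.replicate v.length true ∧ v.length + s = u.length * (m + 1) + t := by
  induction h with
  | nil => simp
  | @step s t r a b u v e htail ih =>
    obtain ⟨i, -, hi⟩ := List.mem_map.mp e
    cases hi
    obtain ⟨hv, hlen⟩ := ih
    refine ⟨by rw [hv]; simp [List.replicate_succ], ?_⟩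
    rw [Fin.val_add_one s] at hlen
    split_ifs at hlen ⊢ with hlast
    · subst hlast
      simp only [Option.toList_some, List.length_append, List.length_singleton,
        Fin.val_last] at hlen ⊢
      linarith
    · simp only [Option.toList_some, Option.toList_none, List.length_append,
        List.length_singleton, List.length_nil, Nat.zero_add]
      omega

theorem onesCycle_reads_chain (m : ℕ) (r : Fin (m + 1)) :
    (onesCycle m).Reads (0 : Fin (m + 1)) r [] (List.replicate r true) := by
  induction r using Fin.induction with
  | zero => exact .nil _
  | succ i ih =>
    have e := onesCycle_edge m i.castSucc
    rw [if_neg (Fin.castSucc_lt_last i).ne, Fin.coeSucc_eq_succ] at e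
    simpa [List.replicate_succ'] using ih.trans (Automaton.Reads.single e)

theorem onesCycle_reads_loops (m q : ℕ) :
    (onesCycle m).Reads (0 : Fin (m + 1)) (0 : Fin (m + 1)) (List.replicate q false)
      (List.replicate (q * (m + 1)) true) := by
  induction q with
  | zero => simpa using .nil _
  | succ q ih =>
    have e := onesCycle_edge m (Fin.last m)
    rw [if_pos rfl, Fin.last_add_one] at e
    have loop := (ih.trans (onesCycle_reads_chain m (Fin.last m))).trans (Automaton.Reads.single e)
    convert loop using 2
    · simp [List.replicate_succ']
    · rw [Option.toList_some, List.append_assoc, ← List.replicate_succ', Fin.val_last,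
        ← List.replicate_add, Nat.succ_mul]

theorem onesCycle_rel_replicate (m n : ℕ) :
    (onesCycle m).Rel (List.replicate (n / (m + 1)) false) (List.replicate n true) := by
  have h := (onesCycle_reads_loops m (n / (m + 1))).trans
    (onesCycle_reads_chain m ⟨n % (m + 1), Nat.mod_lt _ m.succ_pos⟩)
  rw [List.append_nil, ← List.replicate_add, Nat.div_add_mod'] at h
  exact ⟨_, _, h⟩

theorem onesCycle_outputs_subset (m : ℕ) (p : List Bool) :
    {x | (onesCycle m).Rel p x} ⊆
      ↑((Finset.range (2 * m + 1)).image fun j =>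
        List.replicate (p.length * (m + 1) - m + j) true) := by
  rintro x ⟨s, t, h⟩
  obtain ⟨hx, hlen⟩ := onesCycle_reads h
  have hs : (s : ℕ) ≤ m := Nat.le_of_lt_succ s.isLt
  have ht : (t : ℕ) ≤ m := Nat.le_of_lt_succ t.isLt
  refine Finset.mem_image.mpr ⟨x.length - (p.length * (m + 1) - m), Finset.mem_range.mpr ?_, ?_⟩
  · omega
  · rw [hx, List.length_replicate]
    congr 1
    omega

theorem onesCycle_isDescriptionMode (m : ℕ) : IsDescriptionMode (onesCycle m).Rel := by
  refine ⟨⟨onesCycle m, fun _ _ => Iff.rfl⟩, 2 * m + 1, fun p => ?_⟩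
  have hsub := onesCycle_outputs_subset m p
  refine ⟨(Finset.finite_toSet _).subset hsub, ?_⟩
  have hcard := Set.ncard_le_ncard hsub (Finset.finite_toSet _)
  rw [Set.ncard_coe_finset] at hcard
  exact hcard.trans (Finset.card_image_le.trans (Finset.card_range _).le)

theorem autK_onesCycle_replicate_le (m n : ℕ) :
    autK (onesCycle m).Rel (List.replicate n true) ≤ (n / (m + 1) : ℕ) :=
  sInf_le ⟨_, onesCycle_rel_replicate m n, by simp⟩

/-- For every automatic description mode there is `c > 0` with
`K_R(1ⁿ) ≥ n/c − 1` (stated as `n ≤ c·(K_R(1ⁿ)+1)`); consequently there is no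
optimal automatic description mode. -/
theorem autK_ones_lower_and_no_optimal :
    (∀ R : List Bool → List Bool → Prop, IsDescriptionMode R →
      ∃ c : ℕ, 0 < c ∧ ∀ n : ℕ,
        (n : ℕ∞) ≤ (c : ℕ∞) * (autK R (List.replicate n true) + 1)) ∧
    ¬ ∃ R : List Bool → List Bool → Prop, IsDescriptionMode R ∧
        ∀ R' : List Bool → List Bool → Prop, IsDescriptionMode R' →
          ∃ c : ℕ, ∀ x : List Bool, autK R x ≤ autK R' x + c := by
  refine ⟨fun R hR => ?_, ?_⟩
  · obtain ⟨c, hc, hlen⟩ := hR.length_le_mul_autK_add_one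
    exact ⟨c, hc, fun n => by simpa using hlen (List.replicate n true)⟩
  rintro ⟨R, hR, hopt⟩
  obtain ⟨c, hc, hlen⟩ := hR.length_le_mul_autK_add_one
  -- For `n = 2c (d + 2)` the cycle of length `2c` gives `K_R(1ⁿ) ≤ 2d + 2`, so `n ≤ c (2d + 3)`.
  obtain ⟨d, hd⟩ := hopt _ (onesCycle_isDescriptionMode (2 * c - 1))
  have hcycle := autK_onesCycle_replicate_le (2 * c - 1) (2 * c * (d + 2))
  rw [Nat.sub_add_cancel (by omega), Nat.mul_div_cancel_left _ (by omega)] at hcycle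
  have hbound : ((2 * c * (d + 2) : ℕ) : ℕ∞) ≤ c * ((d + 2 : ℕ) + d + 1) :=
    calc ((2 * c * (d + 2) : ℕ) : ℕ∞)
        ≤ c * (autK R (List.replicate (2 * c * (d + 2)) true) + 1) := by
          simpa using hlen (List.replicate (2 * c * (d + 2)) true)
      _ ≤ c * ((d + 2 : ℕ) + d + 1) := by grw [hd, hcycle]
  norm_cast at hbound
  nlinarith
end

section
/- Automatic complexity is superadditive under concatenation: for every automatic description mode R and all binary strings x, y one has K_R(xy) ≥ K_R(x) + K_R(y). -/
lemma Automaton.Reads.split {A B : Type*} {G : Automaton A B} {s t : Fin G.n}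
    {u : List A} {v : List B} (h : G.Reads s t u v) :
    ∀ v1 v2 : List B, v = v1 ++ v2 →
      ∃ (m : Fin G.n) (u1 u2 : List A), u = u1 ++ u2 ∧
        G.Reads s m u1 v1 ∧ G.Reads m t u2 v2 := by
  induction h with
  | nil s =>
      rintro v1 v2 h
      obtain ⟨rfl, rfl⟩ := List.append_eq_nil_iff.mp h.symm
      exact ⟨s, [], [], rfl, .nil s, .nil s⟩
  | @step s t r a b u v he hr ih =>
      rintro v1 v2 h
      cases v1 with
      | nil =>
          refine ⟨s, [], _, rfl, .nil s, ?_⟩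
          rw [show v2 = b.toList ++ v from by simpa using h.symm]
          exact .step he hr
      | cons c v1' =>
          cases b with
          | none =>
              simp only [Option.toList, List.nil_append] at h
              obtain ⟨m, u1, u2, rfl, h1, h2⟩ := ih _ _ h
              exact ⟨m, a.toList ++ u1, u2, by simp, .step he h1, h2⟩
          | some b0 =>
              simp only [Option.toList, List.cons_append, List.singleton_append,
                List.cons.injEq] at h
              obtain ⟨rfl, h⟩ := h
              obtain ⟨m, u1, u2, rfl, h1, h2⟩ := ih _ _ h
              exact ⟨m, a.toList ++ u1, u2, by simp, .step he h1, h2⟩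

/-- Automatic complexity is superadditive under concatenation:
`K_R(xy) ≥ K_R(x) + K_R(y)`. -/
theorem autK_superadditive (R : List Bool → List Bool → Prop)
    (hR : IsDescriptionMode R) (x y : List Bool) :
    autK R x + autK R y ≤ autK R (x ++ y) := by
  obtain ⟨⟨G, hG⟩, -⟩ := hR
  apply le_sInf
  rintro n ⟨p, hp, rfl⟩
  obtain ⟨s, t, hread⟩ := (hG p (x ++ y)).mp hp
  obtain ⟨m, p1, p2, rfl, h1, h2⟩ := hread.split x y rfl
  have hx : autK R x ≤ (p1.length : ℕ∞) :=
    sInf_le ⟨p1, (hG p1 x).mpr ⟨s, m, h1⟩, rfl⟩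
  have hy : autK R y ≤ (p2.length : ℕ∞) :=
    sInf_le ⟨p2, (hG p2 y).mpr ⟨m, t, h2⟩, rfl⟩
  calc autK R x + autK R y ≤ (p1.length : ℕ∞) + p2.length := add_le_add hx hy
    _ = ((p1 ++ p2).length : ℕ∞) := by simp [List.length_append]
end

section
/- Automatic complexity does not increase under automatic O(1)-valued maps: if S is an automatic description mode, then for every automatic description mode R there exists an automatic description mode R' such that K_{R'}(y) ≤ K_R(x) whenever (x,y) ∈ S. -/
/-!
Take `R' = S ∘ R`: a description `p` of `x` under `R`, followed by `S x y`, is a description of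
`y` of the same length. The composite is automatic, realised by the product of transducers in
which a component whose move does not touch the middle tape may stay idle, and it is O(1)-valued,
since `p` has at most `c_R` images `x`, each with at most `c_S` images `y`.
-/

namespace Automaton

variable {A B C : Type*}

theorem Reads.append {G : Automaton A B} {s m t : Fin G.n} {u₁ u₂ : List A}
    {v₁ v₂ : List B} (h₁ : G.Reads s m u₁ v₁) (h₂ : G.Reads m t u₂ v₂) :
    G.Reads s t (u₁ ++ u₂) (v₁ ++ v₂) := by
  induction h₁ with
  | nil => simpa using h₂
  | step he _ ih => simpa only [List.append_assoc] using Reads.step he (ih h₂)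

theorem Reads.exists_split_of_input_cons {G : Automaton A B} {s t : Fin G.n} {a : A}
    {u : List A} {v : List B} (h : G.Reads s t (a :: u) v) :
    ∃ (m m' : Fin G.n) (b : Option B) (v₁ v₂ : List B),
      G.Reads s m [] v₁ ∧ (m, (some a, b), m') ∈ G.edges ∧ G.Reads m' t u v₂ ∧
        v = v₁ ++ b.toList ++ v₂ := by
  generalize hu : a :: u = u' at h
  induction h with
  | nil => cases hu
  | @step p q r a' b _ _ he hr ih =>
    cases a' with
    | some a' =>
      obtain ⟨rfl, rfl⟩ := List.cons.inj hu
      exact ⟨p, q, b, [], _, Reads.nil _, he, hr, rfl⟩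
    | none =>
      obtain ⟨m, m', b', v₁, v₂, hε, hedge, hrest, rfl⟩ := ih hu
      exact ⟨m, m', b', b.toList ++ v₁, v₂, by simpa using Reads.step he hε, hedge, hrest,
        by simp⟩

/-- Runs `G` and `H` in parallel, feeding the output of `G` to `H`: a move either passes a
common middle letter (or ε) from `G` to `H`, or is an ε-output move of `G` while `H` idles, or an
ε-input move of `H` while `G` idles. -/
def comp [DecidableEq B] (G : Automaton A B) (H : Automaton B C) : Automaton A C where
  n := G.n * H.n
  edges :=
    (G.edges.flatMap fun (s, (a, b), t) => H.edges.filterMap fun (s', (b', c), t') =>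
      if b = b' then some (finProdFinEquiv (s, s'), (a, c), finProdFinEquiv (t, t')) else none)
    ++ (G.edges.flatMap fun (s, (a, b), t) => if b = none then
      (List.finRange H.n).map fun s' => (finProdFinEquiv (s, s'), (a, none), finProdFinEquiv (t, s'))
      else [])
    ++ (H.edges.flatMap fun (s', (b, c), t') => if b = none then
      (List.finRange G.n).map fun s => (finProdFinEquiv (s, s'), (none, c), finProdFinEquiv (s, t'))
      else [])

variable [DecidableEq B] {G : Automaton A B} {H : Automaton B C}

theorem sync_mem_comp_edges {s t : Fin G.n} {s' t' : Fin H.n} {a : Option A} {b : Option B}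
    {c : Option C} (hG : (s, (a, b), t) ∈ G.edges) (hH : (s', (b, c), t') ∈ H.edges) :
    (finProdFinEquiv (s, s'), (a, c), finProdFinEquiv (t, t')) ∈ (G.comp H).edges :=
  List.mem_append_left _ <| List.mem_append_left _ <|
    List.mem_flatMap.2 ⟨_, hG, List.mem_filterMap.2 ⟨_, hH, by simp⟩⟩

theorem leftEps_mem_comp_edges {s t : Fin G.n} {a : Option A}
    (hG : (s, (a, none), t) ∈ G.edges) (s' : Fin H.n) :
    (finProdFinEquiv (s, s'), (a, none), finProdFinEquiv (t, s')) ∈ (G.comp H).edges :=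
  List.mem_append_left _ <| List.mem_append_right _ <| List.mem_flatMap.2 ⟨_, hG, by simp⟩

theorem rightEps_mem_comp_edges {s' t' : Fin H.n} {c : Option C}
    (hH : (s', (none, c), t') ∈ H.edges) (s : Fin G.n) :
    (finProdFinEquiv (s, s'), (none, c), finProdFinEquiv (s, t')) ∈ (G.comp H).edges :=
  List.mem_append_right _ <| List.mem_flatMap.2 ⟨_, hH, by simp⟩

theorem exists_of_mem_comp_edges {p q : Fin (G.comp H).n} {a : Option A} {c : Option C}
    (h : (p, (a, c), q) ∈ (G.comp H).edges) :
    ∃ (s t : Fin G.n) (s' t' : Fin H.n),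
      p = finProdFinEquiv (s, s') ∧ q = finProdFinEquiv (t, t') ∧
      ((∃ b, (s, (a, b), t) ∈ G.edges ∧ (s', (b, c), t') ∈ H.edges) ∨
        ((s, (a, none), t) ∈ G.edges ∧ c = none ∧ t' = s') ∨
        ((s', (none, c), t') ∈ H.edges ∧ a = none ∧ t = s)) := by
  rcases List.mem_append.1 h with h | h
  · rcases List.mem_append.1 h with h | h
    · obtain ⟨⟨s, ⟨a', b⟩, t⟩, hG, h⟩ := List.mem_flatMap.1 h
      obtain ⟨⟨s', ⟨b', c'⟩, t'⟩, hH, h⟩ := List.mem_filterMap.1 h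
      dsimp only at h
      split_ifs at h with hb
      · cases hb
        cases h
        exact ⟨s, t, s', t', rfl, rfl, .inl ⟨b, hG, hH⟩⟩
    · obtain ⟨⟨s, ⟨a', b⟩, t⟩, hG, h⟩ := List.mem_flatMap.1 h
      dsimp only at h
      split_ifs at h with hb
      · obtain ⟨s', -, h⟩ := List.mem_map.1 h
        cases hb
        cases h
        exact ⟨s, t, s', s', rfl, rfl, .inr (.inl ⟨hG, rfl, rfl⟩)⟩
      · cases h
  · obtain ⟨⟨s', ⟨b, c'⟩, t'⟩, hH, h⟩ := List.mem_flatMap.1 h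
    dsimp only at h
    split_ifs at h with hb
    · obtain ⟨s, -, h⟩ := List.mem_map.1 h
      cases hb
      cases h
      exact ⟨s, s, s', t', rfl, rfl, .inr (.inr ⟨hH, rfl, rfl⟩)⟩
    · cases h

theorem Reads.comp_of_input_nil {s' t' : Fin H.n} {w : List C} (h : H.Reads s' t' [] w)
    (s : Fin G.n) :
    (G.comp H).Reads (finProdFinEquiv (s, s')) (finProdFinEquiv (s, t')) [] w := by
  generalize hv : ([] : List B) = v at h
  induction h with
  | nil => exact Reads.nil _
  | @step _ _ _ b _ _ _ he _ ih =>
    obtain ⟨hb, hu⟩ := List.append_eq_nil_iff.1 hv.symm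
    obtain rfl := Option.toList_eq_nil_iff.1 hb
    simpa using Reads.step (rightEps_mem_comp_edges he s) (ih hu.symm)

theorem Reads.comp {s t : Fin G.n} {s' t' : Fin H.n} {u : List A} {v : List B} {w : List C}
    (hG : G.Reads s t u v) (hH : H.Reads s' t' v w) :
    (G.comp H).Reads (finProdFinEquiv (s, s')) (finProdFinEquiv (t, t')) u w := by
  induction hG generalizing s' w with
  | nil p => exact hH.comp_of_input_nil p
  | @step p _ _ _ b _ _ he _ ih =>
    cases b with
    | none => simpa using Reads.step (leftEps_mem_comp_edges he s') (ih hH)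
    | some b =>
      obtain ⟨m, m', c, w₁, w₂, hε, hedge, hrest, rfl⟩ := hH.exists_split_of_input_cons
      have hsync := Reads.step (sync_mem_comp_edges he hedge) (ih hrest)
      simpa using (hε.comp_of_input_nil p).append hsync

theorem Reads.exists_of_comp {p q : Fin (G.comp H).n} {u : List A} {w : List C}
    (h : (G.comp H).Reads p q u w) :
    ∃ v : List B,
      G.Reads (finProdFinEquiv.symm p).1 (finProdFinEquiv.symm q).1 u v ∧
        H.Reads (finProdFinEquiv.symm p).2 (finProdFinEquiv.symm q).2 v w := by
  induction h with
  | nil => exact ⟨[], Reads.nil _, Reads.nil _⟩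
  | step he _ ih =>
    obtain ⟨s, t, s', t', rfl, rfl, hedge⟩ := exists_of_mem_comp_edges he
    obtain ⟨v, hG, hH⟩ := ih
    simp only [Equiv.symm_apply_apply] at hG hH ⊢
    rcases hedge with ⟨b, hGe, hHe⟩ | ⟨hGe, rfl, rfl⟩ | ⟨hHe, rfl, rfl⟩
    · exact ⟨b.toList ++ v, hG.step hGe, hH.step hHe⟩
    · exact ⟨v, by simpa using hG.step hGe, by simpa using hH⟩
    · exact ⟨v, by simpa using hG, by simpa using hH.step hHe⟩

theorem rel_comp_iff {u : List A} {w : List C} :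
    (G.comp H).Rel u w ↔ Relation.Comp G.Rel H.Rel u w := by
  constructor
  · rintro ⟨p, q, h⟩
    obtain ⟨v, hG, hH⟩ := h.exists_of_comp
    exact ⟨v, ⟨_, _, hG⟩, ⟨_, _, hH⟩⟩
  · rintro ⟨v, ⟨s, t, hG⟩, ⟨s', t', hH⟩⟩
    exact ⟨_, _, hG.comp hH⟩

end Automaton

section Composition

variable {A B C : Type*} {R : List A → List B → Prop} {S : List B → List C → Prop}

theorem IsAutomatic.comp [DecidableEq B] (hR : IsAutomatic R) (hS : IsAutomatic S) :
    IsAutomatic (Relation.Comp R S) := by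
  obtain ⟨G, hG⟩ := hR
  obtain ⟨H, hH⟩ := hS
  refine ⟨G.comp H, fun u w => ?_⟩
  rw [Automaton.rel_comp_iff]
  exact exists_congr fun v => and_congr (hG u v) (hH v w)

theorem BoundedValued.comp (hR : BoundedValued R) (hS : BoundedValued S) :
    BoundedValued (Relation.Comp R S) := by
  obtain ⟨cR, hR⟩ := hR
  obtain ⟨cS, hS⟩ := hS
  refine ⟨cR * cS, fun p => ?_⟩
  set T := (hR p).1.toFinset
  have himage : {w | Relation.Comp R S p w} = ⋃ v ∈ T, {w | S v w} := by
    ext w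
    simp [T, Relation.Comp]
  rw [himage]
  refine ⟨T.finite_toSet.biUnion fun v _ => (hS v).1, ?_⟩
  calc (⋃ v ∈ T, {w | S v w}).ncard
      ≤ ∑ v ∈ T, {w | S v w}.ncard := T.set_ncard_biUnion_le _
    _ ≤ T.card * cS := Finset.sum_le_card_nsmul _ _ _ fun v _ => (hS v).2
    _ ≤ cR * cS := by
      gcongr
      rw [← Set.ncard_eq_toFinset_card _ (hR p).1]
      exact (hR p).2

end Composition

theorem IsDescriptionMode.comp {R S : List Bool → List Bool → Prop} (hR : IsDescriptionMode R)
    (hS : IsDescriptionMode S) : IsDescriptionMode (Relation.Comp R S) :=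
  ⟨hR.1.comp hS.1, hR.2.comp hS.2⟩

theorem autK_comp_le {R S : List Bool → List Bool → Prop} {x y : List Bool} (h : S x y) :
    autK (Relation.Comp R S) y ≤ autK R x :=
  sInf_le_sInf fun _ ⟨p, hp, hn⟩ => ⟨p, ⟨x, hp, h⟩, hn⟩

/-- Automatic complexity does not increase under automatic O(1)-valued maps. -/
theorem autK_noincrease_under_mode (S : List Bool → List Bool → Prop)
    (hS : IsDescriptionMode S) (R : List Bool → List Bool → Prop)
    (hR : IsDescriptionMode R) :
    ∃ R' : List Bool → List Bool → Prop, IsDescriptionMode R' ∧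
      ∀ x y : List Bool, S x y → autK R' y ≤ autK R x :=
  ⟨Relation.Comp R S, hR.comp hS, fun _ _ => autK_comp_le⟩
end

section
/- Every normal binary sequence is finite-state incompressible: if α = a₀a₁a₂… is normal, then for every automatic description mode R, liminf_{n→∞} K_R(a₀…a_{n−1})/n ≥ 1. -/
/-- Number of aligned `k`-blocks among the first `N` blocks of `α` equal to `r`. -/
def alignedCount (α : ℕ → Bool) (k : ℕ) (r : List Bool) (N : ℕ) : ℕ :=
  ((Finset.range N).filter (fun i => List.ofFn (fun j : Fin k => α (i * k + j)) = r)).card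

/-- A binary sequence is normal: every `k`-bit string occurs among the aligned
`k`-bit blocks with limit frequency `2⁻ᵏ`, for every `k ≥ 1`. -/
def IsNormal (α : ℕ → Bool) : Prop :=
  ∀ k : ℕ, 1 ≤ k → ∀ r : List Bool, r.length = k →
    Filter.Tendsto (fun N => (alignedCount α k r N : ℝ) / (N : ℝ))
      Filter.atTop (nhds ((2 : ℝ)⁻¹ ^ k))

/-- The length-`n` prefix of the sequence `α`. -/
def prefixOf (α : ℕ → Bool) (n : ℕ) : List Bool := List.ofFn fun i : Fin n => α i

/-!
Cut the prefix of length `n` into aligned blocks of length `k`. For an automatic relation a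
description of `x ++ y` splits, at the state reached once `x` has been output, into descriptions
of `x` and of `y`; so `K_R` is superadditive and `K_R(α↾n)` is at least `t` times the number of
blocks of complexity `≥ t`. As `R` is `c`-valued, fewer than `2 ^ t * c` strings have complexity
`< t`, hence for `k = s (b + 1)`, `t = s b` and `2 ^ s > b² c` almost all `k`-bit strings, and by
normality almost all blocks, have complexity `≥ t`, while `t / k = b / (b + 1)`.
-/

open Finset Filter Topology

namespace Automaton

variable {A B : Type*} {G : Automaton A B}

theorem Reads.exists_split_output {s t : Fin G.n} {u : List A} {v : List B}
    (h : G.Reads s t u v) : ∀ v₁ v₂ : List B, v = v₁ ++ v₂ →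
    ∃ (m : Fin G.n) (u₁ u₂ : List A), u = u₁ ++ u₂ ∧ G.Reads s m u₁ v₁ ∧ G.Reads m t u₂ v₂ := by
  induction h with
  | nil s =>
    intro v₁ v₂ hv
    obtain ⟨rfl, rfl⟩ := List.append_eq_nil_iff.mp hv.symm
    exact ⟨s, [], [], rfl, .nil s, .nil s⟩
  | @step s t r a b u v he h ih =>
    rintro (_ | ⟨c, v₁⟩) v₂ hv
    · rw [List.nil_append] at hv
      exact ⟨s, [], a.toList ++ u, rfl, .nil s, hv ▸ .step he h⟩
    · cases b with
      | none =>
        obtain ⟨m, u₁, u₂, rfl, h₁, h₂⟩ := ih (c :: v₁) v₂ hv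
        exact ⟨m, a.toList ++ u₁, u₂, by simp, by simpa using Reads.step (b := none) he h₁, h₂⟩
      | some c' =>
        obtain ⟨rfl, hv₁⟩ : c' = c ∧ v = v₁ ++ v₂ := by simpa using hv
        obtain ⟨m, u₁, u₂, rfl, h₁, h₂⟩ := ih v₁ v₂ hv₁
        exact ⟨m, a.toList ++ u₁, u₂, by simp, by simpa using Reads.step (b := some c') he h₁, h₂⟩

end Automaton

section autK

variable {R : List Bool → List Bool → Prop}

theorem autK_le_length {p x : List Bool} (h : R p x) : autK R x ≤ p.length :=
  sInf_le ⟨p, h, rfl⟩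

theorem exists_length_lt_of_autK_lt {x : List Bool} {n : ℕ} (h : autK R x < n) :
    ∃ p, R p x ∧ p.length < n := by
  obtain ⟨_, ⟨p, hp, rfl⟩, hlt⟩ := sInf_lt_iff.mp h
  exact ⟨p, hp, by exact_mod_cast hlt⟩

theorem autK_add_autK_le_autK_append (hR : IsAutomatic R) (x y : List Bool) :
    autK R x + autK R y ≤ autK R (x ++ y) := by
  obtain ⟨G, hG⟩ := hR
  refine le_sInf ?_
  rintro _ ⟨p, hp, rfl⟩
  obtain ⟨s, t, hst⟩ := (hG p (x ++ y)).mp hp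
  obtain ⟨m, p₁, p₂, rfl, h₁, h₂⟩ := hst.exists_split_output x y rfl
  calc autK R x + autK R y ≤ p₁.length + p₂.length :=
        add_le_add (autK_le_length ((hG _ _).mpr ⟨s, m, h₁⟩))
          (autK_le_length ((hG _ _).mpr ⟨m, t, h₂⟩))
    _ = (p₁ ++ p₂).length := by simp

end autK

theorem sum_map_le_flatten {f : List Bool → ℕ∞} (hf : ∀ x y, f x + f y ≤ f (x ++ y))
    (L : List (List Bool)) : (L.map f).sum ≤ f L.flatten := by
  induction L with
  | nil => simp
  | cons x L ih => simpa using (add_le_add le_rfl ih).trans (hf x L.flatten)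

/-- The `i`-th aligned `k`-bit block of `α`, the one compared with `r` in `alignedCount`. -/
def block (α : ℕ → Bool) (k i : ℕ) : List Bool := List.ofFn fun j : Fin k => α (i * k + j)

theorem prefixOf_eq_take (α : ℕ → Bool) {m n : ℕ} (h : m ≤ n) :
    prefixOf α m = (prefixOf α n).take m := by
  apply List.ext_getElem <;> simp [prefixOf, h]

theorem prefixOf_mul_eq_flatten (α : ℕ → Bool) (N k : ℕ) :
    prefixOf α (N * k) = (List.ofFn fun i : Fin N => block α k i).flatten :=
  List.ofFn_mul _

theorem sum_block_le_prefixOf {f : List Bool → ℕ∞} (hf : ∀ x y, f x + f y ≤ f (x ++ y))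
    (α : ℕ → Bool) {N k n : ℕ} (h : N * k ≤ n) :
    ∑ i ∈ range N, f (block α k i) ≤ f (prefixOf α n) := by
  obtain ⟨rest, hrest⟩ := (prefixOf_eq_take α h ▸ List.take_prefix _ _ :
    prefixOf α (N * k) <+: prefixOf α n)
  calc ∑ i ∈ range N, f (block α k i)
      = ((List.ofFn fun i : Fin N => block α k i).map f).sum := by
        rw [List.map_ofFn, List.sum_ofFn, ← Fin.sum_univ_eq_sum_range]; rfl
    _ ≤ f (prefixOf α (N * k)) := prefixOf_mul_eq_flatten α N k ▸ sum_map_le_flatten hf _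
    _ ≤ f (prefixOf α (N * k)) + f rest := le_self_add
    _ ≤ f (prefixOf α n) := hrest ▸ hf _ _

theorem card_mul_le_autK_prefixOf {R : List Bool → List Bool → Prop} (hR : IsAutomatic R)
    {α : ℕ → Bool} {k t N n : ℕ} {S : Finset (List Bool)} (hS : ∀ x ∈ S, (t : ℕ∞) ≤ autK R x)
    (h : N * k ≤ n) :
    ((#{i ∈ range N | block α k i ∈ S} * t : ℕ) : ℕ∞) ≤ autK R (prefixOf α n) :=
  calc ((#{i ∈ range N | block α k i ∈ S} * t : ℕ) : ℕ∞)
      = #{i ∈ range N | block α k i ∈ S} • (t : ℕ∞) := by simp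
    _ ≤ ∑ i ∈ range N with block α k i ∈ S, autK R (block α k i) :=
        card_nsmul_le_sum _ _ _ fun i hi => hS _ (mem_filter.mp hi).2
    _ ≤ ∑ i ∈ range N, autK R (block α k i) := sum_le_sum_of_subset (filter_subset _ _)
    _ ≤ autK R (prefixOf α n) := sum_block_le_prefixOf (autK_add_autK_le_autK_append hR) α h

def bitStrings (k : ℕ) : Finset (List Bool) := univ.image (List.ofFn : (Fin k → Bool) → _)

theorem mem_bitStrings {k : ℕ} {x : List Bool} : x ∈ bitStrings k ↔ x.length = k := by
  refine ⟨?_, fun h => mem_image.mpr ⟨fun i => x[i], mem_univ _, ?_⟩⟩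
  · rintro hx
    obtain ⟨f, -, rfl⟩ := mem_image.mp hx
    exact List.length_ofFn
  · subst h; exact List.ofFn_getElem

theorem card_bitStrings (k : ℕ) : #(bitStrings k) = 2 ^ k := by
  simp [bitStrings, card_image_of_injective _ List.ofFn_injective]

theorem card_filter_autK_lt_le {R : List Bool → List Bool → Prop} {c : ℕ}
    (hc : ∀ p, {x | R p x}.Finite ∧ {x | R p x}.ncard ≤ c) (t : ℕ) (V : Finset (List Bool)) :
    #{x ∈ V | autK R x < t} ≤ 2 ^ t * c := by
  classical
  set P := (range t).biUnion bitStrings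
  have hP : #P ≤ 2 ^ t :=
    card_biUnion_le.trans (by simpa [card_bitStrings] using (Nat.geomSum_lt le_rfl
      (fun j hj => mem_range.mp hj)).le)
  have hsub : {x ∈ V | autK R x < t} ⊆ P.biUnion fun p => (hc p).1.toFinset := by
    intro x hx
    obtain ⟨p, hpx, hp⟩ := exists_length_lt_of_autK_lt (mem_filter.mp hx).2
    exact mem_biUnion.mpr ⟨p, mem_biUnion.mpr ⟨p.length, mem_range.mpr hp, mem_bitStrings.mpr rfl⟩,
      by simpa using hpx⟩
  calc #{x ∈ V | autK R x < t} ≤ #(P.biUnion fun p => (hc p).1.toFinset) := card_le_card hsub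
    _ ≤ #P * c := card_biUnion_le_card_mul _ _ _ fun p _ => by
        rw [← Set.ncard_eq_toFinset_card _ (hc p).1]; exact (hc p).2
    _ ≤ 2 ^ t * c := Nat.mul_le_mul_right c hP

theorem exists_block_set {R : List Bool → List Bool → Prop} {c : ℕ}
    (hc : ∀ p, {x | R p x}.Finite ∧ {x | R p x}.ncard ≤ c) {a b : ℕ} (hab : a < b) :
    ∃ k t : ℕ, 1 ≤ k ∧ ∃ S : Finset (List Bool),
      (∀ x ∈ S, x.length = k ∧ (t : ℕ∞) ≤ autK R x) ∧ a * k * 2 ^ k < b * t * #S := by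
  classical
  set s := b ^ 2 * c + 1
  set t := s * b
  set k := s * (b + 1)
  set S := {x ∈ bitStrings k | ¬ autK R x < t}
  have hsplit : #{x ∈ bitStrings k | autK R x < t} + #S = 2 ^ s * 2 ^ t := by
    rw [card_filter_add_card_filter_not, card_bitStrings, ← pow_add]; congr 1; ring
  have hbad : b * b * #{x ∈ bitStrings k | autK R x < t} < 2 ^ s * 2 ^ t :=
    calc b * b * #{x ∈ bitStrings k | autK R x < t} ≤ b ^ 2 * c * 2 ^ t := by
          nlinarith [card_filter_autK_lt_le hc t (bitStrings k)]
      _ < 2 ^ s * 2 ^ t := by gcongr; exact Nat.lt_two_pow_self.trans_le' (Nat.le_succ _)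
  have hab' : a * (b + 1) + 1 ≤ b * b := by nlinarith
  refine ⟨k, t, Nat.one_le_iff_ne_zero.mpr (by positivity), S, fun x hx => ?_, ?_⟩
  · obtain ⟨hx, hK⟩ := mem_filter.mp hx
    exact ⟨mem_bitStrings.mp hx, not_lt.mp hK⟩
  · calc a * k * 2 ^ k = s * (a * (b + 1) * (2 ^ s * 2 ^ t)) := by ring
      _ < s * (b * b * #S) := Nat.mul_lt_mul_of_pos_left
          (by nlinarith [Nat.mul_le_mul_right (2 ^ s * 2 ^ t) hab']) (by positivity)
      _ = b * t * #S := by ring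

theorem IsNormal.tendsto_card_block_mem {α : ℕ → Bool} (hα : IsNormal α) {k : ℕ} (hk : 1 ≤ k)
    {S : Finset (List Bool)} (hS : ∀ x ∈ S, x.length = k) :
    Tendsto (fun N => (#{i ∈ range N | block α k i ∈ S} : ℝ) / N) atTop
      (𝓝 (#S * (2 : ℝ)⁻¹ ^ k)) := by
  have h := tendsto_finsetSum S fun r hr => hα k hk r (hS r hr)
  simp only [sum_const, nsmul_eq_mul, ← sum_div] at h
  convert h using 3 with N
  rw [← sum_card_fiberwise_eq_card_filter, Nat.cast_sum]
  rfl

theorem IsNormal.eventually_mul_succ_lt_card_block_mem {α : ℕ → Bool} (hα : IsNormal α) {k : ℕ}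
    (hk : 1 ≤ k) {S : Finset (List Bool)} (hS : ∀ x ∈ S, x.length = k) {A B : ℕ}
    (h : A * 2 ^ k < B * #S) :
    ∀ᶠ N in atTop, A * (N + 1) < B * #{i ∈ range N | block α k i ∈ S} := by
  have hlim : Tendsto (fun N : ℕ => (A : ℝ) * (1 + 1 / N)) atTop (𝓝 A) := by
    simpa using (tendsto_one_div_atTop_nhds_zero_nat.const_add 1).const_mul (A : ℝ)
  have hlt : (A : ℝ) < B * (#S * (2 : ℝ)⁻¹ ^ k) := by
    rw [inv_pow, ← mul_assoc, ← div_eq_mul_inv, lt_div_iff₀ (by positivity)]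
    exact_mod_cast h
  filter_upwards [hlim.eventually_lt ((hα.tendsto_card_block_mem hk hS).const_mul (B : ℝ)) hlt,
    eventually_gt_atTop 0] with N hN hN0
  have hN0' : (0 : ℝ) < N := by exact_mod_cast hN0
  rw [← mul_div_assoc, lt_div_iff₀ hN0', mul_assoc, add_mul, one_div_mul_cancel hN0'.ne'] at hN
  exact_mod_cast (by linarith : (A : ℝ) * (N + 1) < B * #{i ∈ range N | block α k i ∈ S})

/-- Normal sequences are incompressible by finite automata:
`liminf K_R(α↾n)/n ≥ 1`, expressed as: for every rational `a/b < 1`,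
eventually `K_R(α↾n) ≥ (a/b)·n`. -/
theorem normal_incompressible (α : ℕ → Bool) (hα : IsNormal α)
    (R : List Bool → List Bool → Prop) (hR : IsDescriptionMode R) :
    ∀ a b : ℕ, a < b →
      ∀ᶠ n : ℕ in Filter.atTop, (a * n : ℕ∞) ≤ (b : ℕ∞) * autK R (prefixOf α n) := by
  obtain ⟨hRaut, c, hc⟩ := hR
  intro a b hab
  obtain ⟨k, t, hk, S, hS, hdense⟩ := exists_block_set hc hab
  obtain ⟨N₀, hN₀⟩ := eventually_atTop.mp <| hα.eventually_mul_succ_lt_card_block_mem hk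
    (fun x hx => (hS x hx).1) hdense
  filter_upwards [eventually_ge_atTop (k * N₀)] with n hn
  set N := n / k
  have hN : N₀ ≤ N := (Nat.le_div_iff_mul_le hk).mpr (by linarith)
  have hn_lt : n < k * (N + 1) := by
    rw [mul_add, mul_one, mul_comm]; exact Nat.lt_div_mul_add hk
  have hcount : a * n ≤ b * (#{i ∈ range N | block α k i ∈ S} * t) :=
    calc a * n ≤ a * k * (N + 1) := by rw [mul_assoc]; exact Nat.mul_le_mul_left a hn_lt.le
      _ ≤ b * (#{i ∈ range N | block α k i ∈ S} * t) := by linarith [hN₀ N hN]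
  calc (a * n : ℕ∞) = ((a * n : ℕ) : ℕ∞) := by push_cast; rfl
    _ ≤ ((b * (#{i ∈ range N | block α k i ∈ S} * t) : ℕ) : ℕ∞) := by exact_mod_cast hcount
    _ ≤ b * autK R (prefixOf α n) := by
        rw [Nat.cast_mul]
        exact mul_le_mul_right (card_mul_le_autK_prefixOf hRaut (fun x hx => (hS x hx).2)
          (Nat.div_mul_le_self n k)) _
end

section
/- Every sequence that is not normal is finite-state compressible: if α is not normal, there exists an automatic description mode R and ε > 0 such that K_R(a₀…a_{n−1}) ≤ (1−ε)·n for infinitely many n. -/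
/-!
If `α` is not normal, some `k`-bit block `r` has aligned frequency above some `a > 2⁻ᵏ`
infinitely often. Group `t = 2 ^ W` aligned blocks into a super-block and encode it by the
number `j` of occurrences of `r` (in `W + 1` bits) followed by its index among the super-blocks
with that count. For `2⁻ᵏ < β < a`, the product distribution giving `r` weight `β` and the other
blocks equal weight `γ` gives each super-block with count `j` weight `β ^ j * γ ^ (t - j)`, so
there are at most `(β ^ j * γ ^ (t - j))⁻¹` of them. Where `r` is frequent, the index therefore
costs on average at most `t` times the entropy of that block distribution, which is `< k` by
Gibbs' inequality; for large `W` the code saves a bit per super-block. A prefix-free code is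
decoded by an automaton that buffers a codeword and then emits its super-block; it is
functional between any two states, hence O(1)-valued.
-/

namespace Automaton

variable {A B : Type*}

theorem Reads.append_s14 {G : Automaton A B} {x y z : Fin G.n} {u u' : List A} {v v' : List B}
    (h : G.Reads x y u v) (h' : G.Reads y z u' v') : G.Reads x z (u ++ u') (v ++ v') := by
  induction h with
  | nil => exact h'
  | step hmem _ ih => simpa only [List.append_assoc] using Reads.step hmem (ih h')

section OutputUnique

variable {G : Automaton A B} (rank : Fin G.n → ℕ)
  (hdet : ∀ {x y y' a b b'}, (x, (a, b), y) ∈ G.edges → (x, (a, b'), y') ∈ G.edges →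
    b = b' ∧ y = y')
  (hsilent : ∀ {x y y' a' b b'}, (x, (none, b), y) ∈ G.edges →
    (x, (a', b'), y') ∈ G.edges → a' = none)
  (hrank : ∀ {x y b}, (x, (none, b), y) ∈ G.edges → rank y < rank x)

include hrank in
theorem Reads.rank_le {x y : Fin G.n} {u : List A} {v : List B} (h : G.Reads x y u v)
    (hu : u = []) : rank y ≤ rank x := by
  induction h with
  | nil => exact le_rfl
  | @step x t y a b u v hmem _ ih =>
    obtain ⟨rfl, rfl⟩ : a = none ∧ u = [] := by simpa using hu
    exact (ih rfl).trans (hrank hmem).le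

include hdet hsilent hrank in
/-- Without silent cycles, and with the input letter determining the transition,
an automaton is functional between any two fixed states. -/
theorem Reads.output_unique {x y : Fin G.n} {u : List A} {v v' : List B}
    (h : G.Reads x y u v) (h' : G.Reads x y u v') : v = v' := by
  suffices ∀ {w}, G.Reads x y w v' → u = w → v = v' from this h' rfl
  clear h'
  induction h generalizing v' with
  | nil x =>
    intro w h' hu
    cases h' with
    | nil => rfl
    | @step _ _ _ a _ u₂ _ hmem hrest =>
      obtain ⟨rfl, rfl⟩ : a = none ∧ u₂ = [] := by simpa using hu.symm
      exact absurd (hrank hmem) (hrest.rank_le rank hrank rfl).not_gt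
  | @step _ _ _ a _ u _ hmem hrest ih =>
    intro w h' hu
    cases h' with
    | nil =>
      obtain ⟨rfl, rfl⟩ : a = none ∧ u = [] := by simpa using hu
      exact absurd (hrank hmem) (hrest.rank_le rank hrank rfl).not_gt
    | @step _ _ _ a' _ u' _ hmem' hrest' =>
      obtain ⟨rfl, rfl⟩ : a = a' ∧ u = u' := by
        cases a with
        | none => obtain rfl := hsilent hmem hmem'; simpa using hu
        | some c =>
          cases a' with
          | none => exact absurd (hsilent hmem' hmem) (by simp)
          | some c' => simpa using hu
      obtain ⟨rfl, rfl⟩ := hdet hmem hmem'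
      rw [ih hrest' rfl]

end OutputUnique

theorem boundedValued_rel_of_functional {G : Automaton A B}
    (hfun : ∀ {x y u v v'}, G.Reads x y u v → G.Reads x y u v' → v = v') :
    BoundedValued G.Rel := by
  classical
  let output (p : List A) (q : Fin G.n × Fin G.n) : List B :=
    if h : ∃ v, G.Reads q.1 q.2 p v then h.choose else []
  have hsub : ∀ p, {v | G.Rel p v} ⊆ Set.range (output p) := by
    rintro p v ⟨x, y, h⟩
    have hex : ∃ v, G.Reads x y p v := ⟨v, h⟩
    exact ⟨(x, y), by simp only [output, dif_pos hex]; exact hfun hex.choose_spec h⟩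
  refine ⟨G.n * G.n, fun p => ⟨(Set.finite_range _).subset (hsub p), ?_⟩⟩
  calc {v | G.Rel p v}.ncard ≤ (Set.range (output p)).ncard :=
        Set.ncard_le_ncard (hsub p) (Set.finite_range _)
    _ ≤ Nat.card (Fin G.n × Fin G.n) := Finite.card_range_le _
    _ = G.n * G.n := by simp

section OfRel

variable [Finite A] [Finite B] {σ : Type*} [Finite σ]

noncomputable def ofRel (E : σ → Option A × Option B → σ → Prop) : Automaton A B where
  n := Nat.card σ
  edges :=
    (Set.toFinite {z : σ × (Option A × Option B) × σ | E z.1 z.2.1 z.2.2}).toFinset.toList.map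
      fun z => (Finite.equivFin σ z.1, z.2.1, Finite.equivFin σ z.2.2)

theorem mem_edges_ofRel {E : σ → Option A × Option B → σ → Prop} {q q' : σ}
    {l : Option A × Option B} :
    (Finite.equivFin σ q, l, Finite.equivFin σ q') ∈ (ofRel E).edges ↔ E q l q' := by
  change _ ∈ List.map _ _ ↔ _
  simp only [List.mem_map, Finset.mem_toList, Set.Finite.mem_toFinset, Set.mem_ofPred_eq,
    Prod.mk.injEq, EmbeddingLike.apply_eq_iff_eq]
  constructor
  · rintro ⟨⟨q₁, l₁, q₁'⟩, hE, rfl, rfl, rfl⟩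
    exact hE
  · exact fun hE => ⟨(q, l, q'), hE, rfl, rfl, rfl⟩

end OfRel

section Decoder

variable {ι : Type*} (enc : ι → List A) (out : ι → List B)

/-- Transitions of the decoder of the code `enc`, which outputs `out i` for the codeword `enc i`:
a state `(w, [])` has read `w`, a proper prefix of a codeword; a state `(w, v)` still has to
emit `v`. -/
inductive DecoderStep : List A × List B → Option A × Option B → List A × List B → Prop
  | shift {w : List A} {a : A} :
      (∀ i, enc i ≠ w ++ [a]) → DecoderStep (w, []) (some a, none) (w ++ [a], [])
  | decode {w : List A} {a : A} (i : ι) :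
      enc i = w ++ [a] → DecoderStep (w, []) (some a, none) ([], out i)
  | emit (w : List A) (b : B) (v : List B) : DecoderStep (w, b :: v) (none, some b) (w, v)

variable {enc out}

theorem DecoderStep.output_eq_of_input_eq (hinj : Function.Injective enc)
    {q q₁ q₂ : List A × List B} {a : Option A} {b b' : Option B}
    (h : DecoderStep enc out q (a, b) q₁) (h' : DecoderStep enc out q (a, b') q₂) :
    b = b' ∧ q₁ = q₂ := by
  cases h with
  | shift hw => cases h' with
    | shift => exact ⟨rfl, rfl⟩
    | decode i hi => exact absurd hi (hw i)
  | decode i hi => cases h' with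
    | shift hw => exact absurd hi (hw i)
    | decode j hj => obtain rfl := hinj (hi.trans hj.symm); exact ⟨rfl, rfl⟩
  | emit => cases h'; exact ⟨rfl, rfl⟩

theorem DecoderStep.eq_none_of_silent {q q₁ q₂ : List A × List B} {a' : Option A}
    {b b' : Option B} (h : DecoderStep enc out q (none, b) q₁)
    (h' : DecoderStep enc out q (a', b') q₂) : a' = none := by
  cases h
  cases h'
  rfl

theorem DecoderStep.length_lt_of_silent {q q' : List A × List B} {b : Option B}
    (h : DecoderStep enc out q (none, b) q') : q'.2.length < q.2.length := by
  cases h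
  simp

variable (A B) in
abbrev DecoderState (L M : ℕ) := {q : List A × List B // q.1.length ≤ L ∧ q.2.length ≤ M}

instance [Finite A] [Finite B] (L M : ℕ) : Finite (DecoderState A B L M) :=
  ((List.finite_length_le A L).prod (List.finite_length_le B M)).to_subtype

variable [Finite A] [Finite B]

variable (enc out) in
noncomputable abbrev decoder (L M : ℕ) : Automaton A B :=
  ofRel fun (q : DecoderState A B L M) l q' => DecoderStep enc out q.1 l q'.1

variable {L M : ℕ}

local notation "⟪" q "⟫" => Finite.equivFin (DecoderState A B L M) q

theorem mem_edges_decoder {q q' : DecoderState A B L M} {l : Option A × Option B} :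
    (⟪q⟫, l, ⟪q'⟫) ∈ (decoder enc out L M).edges ↔ DecoderStep enc out q.1 l q'.1 :=
  mem_edges_ofRel

theorem Reads.decoder_step (q : DecoderState A B L M) {q' r : DecoderState A B L M}
    {a : Option A} {b : Option B} {u : List A} {v : List B}
    (h : (decoder enc out L M).Reads ⟪q'⟫ ⟪r⟫ u v)
    (hq : DecoderStep enc out q.1 (a, b) q'.1) :
    (decoder enc out L M).Reads ⟪q⟫ ⟪r⟫ (a.toList ++ u) (b.toList ++ v) :=
  Reads.step (mem_edges_decoder.2 hq) h

theorem decoder_reads_codeword (hpf : ∀ i j, enc i <+: enc j → i = j) {i : ι}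
    (hL : (enc i).length ≤ L) (hM : (out i).length ≤ M) :
    ∀ (u w : List A) (hw : w.length ≤ L), w ++ u = enc i → u ≠ [] →
      (decoder enc out L M).Reads ⟪⟨(w, []), hw, Nat.zero_le M⟩⟫
        ⟪⟨([], out i), Nat.zero_le L, hM⟩⟫ u [] := by
  intro u
  induction u with
  | nil => exact fun _ _ _ h => absurd rfl h
  | cons a u ih =>
    intro w hw hwu _
    rcases eq_or_ne u [] with rfl | hu
    · simpa using Reads.decoder_step ⟨(w, []), hw, Nat.zero_le M⟩
        (Reads.nil (G := decoder enc out L M) ⟪⟨([], out i), Nat.zero_le L, hM⟩⟫)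
        (DecoderStep.decode i hwu.symm)
    · have hwa : (w ++ [a]).length ≤ L := by
        refine le_trans ?_ hL
        rw [← hwu]
        simp
      have hnot : ∀ j, enc j ≠ w ++ [a] := by
        intro j hj
        obtain rfl : j = i := hpf j i ⟨u, by rw [hj, ← hwu]; simp⟩
        exact hu (by simpa [hj] using hwu)
      simpa using Reads.decoder_step ⟨(w, []), hw, Nat.zero_le M⟩
        (ih (w ++ [a]) hwa (by simpa using hwu) hu) (DecoderStep.shift hnot)

theorem decoder_reads_emit :
    ∀ (v : List B) (hv : v.length ≤ M), (decoder enc out L M).Reads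
      ⟪⟨([], v), Nat.zero_le L, hv⟩⟫ ⟪⟨([], []), Nat.zero_le L, Nat.zero_le M⟩⟫ [] v
  | [], _ => Reads.nil _
  | b :: v, hv => by
    simpa using Reads.decoder_step ⟨([], b :: v), Nat.zero_le L, hv⟩
      (decoder_reads_emit v (Nat.le_of_succ_le hv)) (DecoderStep.emit [] b v)

theorem decoder_reads_flatMap (hpf : ∀ i j, enc i <+: enc j → i = j) (hne : ∀ i, enc i ≠ [])
    (hL : ∀ i, (enc i).length ≤ L) (hM : ∀ i, (out i).length ≤ M) (l : List ι) :
    (decoder enc out L M).Reads ⟪⟨([], []), Nat.zero_le L, Nat.zero_le M⟩⟫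
      ⟪⟨([], []), Nat.zero_le L, Nat.zero_le M⟩⟫ (l.flatMap enc) (l.flatMap out) := by
  induction l with
  | nil => exact Reads.nil _
  | cons i l ih =>
    simpa using ((decoder_reads_codeword hpf (hL i) (hM i) (enc i) [] (Nat.zero_le L)
      rfl (hne i)).append_s14 (decoder_reads_emit (out i) (hM i))).append_s14 ih

theorem decoder_output_unique (hinj : Function.Injective enc) {x y : Fin (decoder enc out L M).n}
    {u : List A} {v v' : List B} (h : (decoder enc out L M).Reads x y u v)
    (h' : (decoder enc out L M).Reads x y u v') : v = v' := by
  let e := Finite.equivFin (DecoderState A B L M)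
  refine h.output_unique (fun x => (e.symm x).1.2.length) ?_ ?_ ?_ h'
  · intro x y y' a b b' hy hy'
    obtain ⟨q, rfl⟩ := e.surjective x
    obtain ⟨q₁, rfl⟩ := e.surjective y
    obtain ⟨q₂, rfl⟩ := e.surjective y'
    obtain ⟨rfl, hq⟩ :=
      (mem_edges_decoder.1 hy).output_eq_of_input_eq hinj (mem_edges_decoder.1 hy')
    exact ⟨rfl, congrArg e (Subtype.ext hq)⟩
  · intro x y y' a' b b' hy hy'
    obtain ⟨q, rfl⟩ := e.surjective x
    obtain ⟨q₁, rfl⟩ := e.surjective y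
    obtain ⟨q₂, rfl⟩ := e.surjective y'
    exact (mem_edges_decoder.1 hy).eq_none_of_silent (mem_edges_decoder.1 hy')
  · intro x y b hy
    obtain ⟨q, rfl⟩ := e.surjective x
    obtain ⟨q', rfl⟩ := e.surjective y
    simpa using (mem_edges_decoder.1 hy).length_lt_of_silent

end Decoder

end Automaton

open Automaton in
theorem exists_isAutomatic_boundedValued_of_prefixFree {A B ι : Type*} [Finite A] [Finite B]
    [Finite ι] (enc : ι → List A) (out : ι → List B)
    (hpf : ∀ i j, enc i <+: enc j → i = j)
    (hne : ∀ i, enc i ≠ []) :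
    ∃ R : List A → List B → Prop, IsAutomatic R ∧ BoundedValued R ∧
      ∀ l : List ι, R (l.flatMap enc) (l.flatMap out) := by
  obtain ⟨L, hL⟩ := (Set.finite_range fun i => (enc i).length).bddAbove
  obtain ⟨M, hM⟩ := (Set.finite_range fun i => (out i).length).bddAbove
  have hinj : Function.Injective enc := fun i j h => hpf i j (h ▸ List.prefix_refl _)
  refine ⟨(decoder enc out L M).Rel, ⟨_, fun _ _ => Iff.rfl⟩,
    boundedValued_rel_of_functional (decoder_output_unique hinj), fun l => ⟨_, _,
      decoder_reads_flatMap hpf hne (fun i => hL ⟨i, rfl⟩) (fun i => hM ⟨i, rfl⟩) l⟩⟩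

section ClassCode

open Finset

def binaryDigits (w n : ℕ) : List Bool := List.ofFn fun i : Fin w => n.testBit i

@[simp]
theorem length_binaryDigits (w n : ℕ) : (binaryDigits w n).length = w := List.length_ofFn

theorem binaryDigits_inj {w m n : ℕ} (hm : m < 2 ^ w) (hn : n < 2 ^ w)
    (h : binaryDigits w m = binaryDigits w n) : m = n := by
  refine Nat.eq_of_testBit_eq fun i => ?_
  rcases lt_or_ge i w with hi | hi
  · exact congrFun (List.ofFn_inj.1 h) ⟨i, hi⟩
  · rw [Nat.testBit_lt_two_pow (hm.trans_le (Nat.pow_le_pow_right two_pos hi)),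
      Nat.testBit_lt_two_pow (hn.trans_le (Nat.pow_le_pow_right two_pos hi))]

variable {ι : Type*} [Fintype ι] [DecidableEq ι] (cls : ι → ℕ) (w : ℕ)

def classOf (j : ℕ) : Finset ι := {i | cls i = j}

omit [DecidableEq ι] in
theorem mem_classOf_self (i : ι) : i ∈ classOf cls (cls i) := by simp [classOf]

theorem idxOf_lt_two_pow_clog {i : ι} {c : ℕ} (hi : i ∈ classOf cls c) :
    (classOf cls c).toList.idxOf i < 2 ^ Nat.clog 2 #(classOf cls c) :=
  (List.idxOf_lt_length_of_mem (Finset.mem_toList.2 hi)).trans_le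
    ((Finset.length_toList _).trans_le (Nat.le_pow_clog one_lt_two _))

noncomputable def classCode (i : ι) : List Bool :=
  binaryDigits w (cls i) ++
    binaryDigits (Nat.clog 2 #(classOf cls (cls i))) ((classOf cls (cls i)).toList.idxOf i)

theorem length_classCode (i : ι) :
    (classCode cls w i).length = w + Nat.clog 2 #(classOf cls (cls i)) := by
  simp [classCode]

theorem classCode_prefixFree (hcls : ∀ i, cls i < 2 ^ w) {i j : ι}
    (h : classCode cls w i <+: classCode cls w j) : i = j := by
  obtain ⟨s, hs⟩ := h
  rw [classCode, classCode, List.append_assoc] at hs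
  obtain ⟨hc, hidx⟩ := List.append_inj hs (by simp)
  obtain hij : cls i = cls j := binaryDigits_inj (hcls i) (hcls j) hc
  rw [hij] at hidx
  have hj := mem_classOf_self cls j
  have hi : i ∈ classOf cls (cls j) := hij ▸ mem_classOf_self cls i
  obtain ⟨hidx, -⟩ := List.append_inj (hidx.trans (List.append_nil _).symm) (by simp)
  exact (List.idxOf_inj (Finset.mem_toList.2 hi)).1
    (binaryDigits_inj (idxOf_lt_two_pow_clog cls hi) (idxOf_lt_two_pow_clog cls hj) hidx)

end ClassCode

theorem natCast_clog_two_le_logb_inv_add_one {n : ℕ} (hn : 1 ≤ n) {p : ℝ} (hp : 0 < p)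
    (h : n * p ≤ 1) : (Nat.clog 2 n : ℝ) ≤ Real.logb 2 p⁻¹ + 1 := by
  have hceil : (Nat.clog 2 n : ℝ) < Real.logb 2 n + 1 := by
    have hceil := Real.natCeil_logb_natCast 2 n
    rw [Nat.cast_ofNat] at hceil
    rw [← hceil]
    exact Nat.ceil_lt_add_one (Real.logb_nonneg one_lt_two (by exact_mod_cast hn))
  have hnp : (n : ℝ) ≤ p⁻¹ := by rw [← one_div, le_div_iff₀ hp]; exact h
  have hlog := Real.logb_le_logb_of_le one_lt_two (by positivity) hnp
  linarith

section BlockCount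

open Finset

variable {X : Type*} [Fintype X] [DecidableEq X] {t : ℕ}

def blockCount (r : X) (V : Fin t → X) : ℕ := #{j | V j = r}

omit [Fintype X] in
theorem blockCount_le (r : X) (V : Fin t → X) : blockCount r V ≤ t :=
  (card_filter_le _ _).trans (by simp)

/-- The product weights with `β` on `r` and `γ` elsewhere form a probability distribution on
`Fin t → X`, under which every member of the class `j` has weight `β ^ j * γ ^ (t - j)`. -/
theorem card_classOf_blockCount_mul_le {β γ : ℝ} (hβ : 0 ≤ β) (hγ : 0 ≤ γ)
    (hsum : β + (Fintype.card X - 1) * γ = 1) (r : X) (j : ℕ) :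
    #(classOf (blockCount (t := t) r) j) * (β ^ j * γ ^ (t - j)) ≤ (1 : ℝ) := by
  let ν : X → ℝ := fun x => if x = r then β else γ
  have hν : ∑ x, ν x = 1 := by
    rw [Finset.sum_ite, Finset.filter_eq', Finset.filter_ne', sum_const, sum_const,
      card_erase_of_mem (mem_univ r), if_pos (mem_univ r), card_singleton, card_univ, one_smul,
      nsmul_eq_mul, Nat.cast_sub (Fintype.card_pos_iff.2 ⟨r⟩), Nat.cast_one, hsum]
  have hprod : ∀ V : Fin t → X, V ∈ classOf (blockCount r) j →
      ∏ m, ν (V m) = β ^ j * γ ^ (t - j) := by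
    intro V hV
    have hj : #{m | V m = r} = j := (mem_filter.1 hV).2
    have hj' : #{m | ¬V m = r} = t - j := by
      have := card_filter_add_card_filter_not (s := univ) (fun m => V m = r)
      rw [card_univ, Fintype.card_fin] at this
      omega
    rw [prod_ite, prod_const, prod_const, hj, hj']
  calc _ = ∑ V ∈ classOf (blockCount (t := t) r) j, ∏ m, ν (V m) := by
        rw [sum_congr rfl hprod, sum_const, nsmul_eq_mul]
    _ ≤ ∑ V : Fin t → X, ∏ m, ν (V m) :=
        sum_le_sum_of_subset_of_nonneg (subset_univ _) fun V _ _ =>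
          prod_nonneg fun m _ => by dsimp only [ν]; split_ifs <;> assumption
    _ = 1 := by rw [← Fintype.piFinset_univ, ← sum_pow', hν, one_pow]

theorem length_classCode_blockCount_le {β γ : ℝ} (hβ : 0 < β) (hγ : 0 < γ)
    (hsum : β + (Fintype.card X - 1) * γ = 1) (r : X) (w : ℕ) (V : Fin t → X) :
    ((classCode (blockCount r) w V).length : ℝ) ≤
      w + 1 + blockCount r V * Real.logb 2 β⁻¹ +
        (t - blockCount r V) * Real.logb 2 γ⁻¹ := by
  have hcard : 1 ≤ #(classOf (blockCount r) (blockCount r V)) :=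
    card_pos.2 ⟨V, mem_classOf_self _ V⟩
  have hclog := natCast_clog_two_le_logb_inv_add_one hcard (by positivity)
    (card_classOf_blockCount_mul_le hβ.le hγ.le hsum r (blockCount r V))
  rw [mul_inv, ← inv_pow, ← inv_pow, Real.logb_mul (by positivity) (by positivity),
    Real.logb_pow, Real.logb_pow, Nat.cast_sub (blockCount_le r V)] at hclog
  rw [length_classCode]
  push_cast
  linarith

end BlockCount

section AlignedBlocks

open Finset

variable (α : ℕ → Bool) (k : ℕ)

def alignedBlock (i : ℕ) : List.Vector Bool k :=
  ⟨List.ofFn fun j : Fin k => α (i * k + j), List.length_ofFn⟩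

theorem alignedCount_eq_card_filter (r : List.Vector Bool k) (N : ℕ) :
    alignedCount α k r.toList N = #{i ∈ range N | alignedBlock α k i = r} := by
  unfold alignedCount
  congr 1
  exact filter_congr fun i _ => List.Vector.toList_injective.eq_iff (a := alignedBlock α k i)

theorem sum_alignedCount (N : ℕ) :
    ∑ r : List.Vector Bool k, alignedCount α k r.toList N = N := by
  simp_rw [alignedCount_eq_card_filter]
  exact (card_eq_sum_card_fiberwise fun i _ =>
    mem_coe.2 (mem_univ (alignedBlock α k i))).symm.trans (card_range N)

variable (t : ℕ)

def superBlock (i : ℕ) : Fin t → List.Vector Bool k := fun j => alignedBlock α k (i * t + j)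

variable {α k t} in
def concatBlocks (V : Fin t → List.Vector Bool k) : List Bool :=
  (List.ofFn fun j => (V j).toList).flatten

theorem concatBlocks_superBlock (i : ℕ) :
    concatBlocks (superBlock α k t i) = List.ofFn fun m : Fin (t * k) => α (i * (t * k) + m) := by
  rw [List.ofFn_mul, concatBlocks]
  congr 1
  refine List.ofFn_inj.2 (funext fun j => List.ofFn_inj.2 (funext fun l => ?_))
  congr 1
  simp only
  ring

theorem prefixOf_eq_flatMap_superBlock (N : ℕ) :
    prefixOf α (N * (t * k)) =
      (List.ofFn fun i : Fin N => superBlock α k t i).flatMap concatBlocks := by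
  rw [prefixOf, List.ofFn_mul, List.flatMap_def, List.map_ofFn]
  congr 1
  exact List.ofFn_inj.2 (funext fun i => (concatBlocks_superBlock α k t i).symm)

theorem sum_blockCount_superBlock (r : List.Vector Bool k) (N : ℕ) :
    ∑ i : Fin N, blockCount r (superBlock α k t i) = alignedCount α k r.toList (N * t) := by
  rw [alignedCount_eq_card_filter, card_filter, sum_range]
  simp_rw [blockCount, card_filter]
  rw [← Fintype.sum_prod_type']
  refine Fintype.sum_equiv finProdFinEquiv _ _ fun x => ?_
  simp only [superBlock, finProdFinEquiv_apply_val,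
    show (x.1 : ℕ) * t + x.2 = x.2 + t * x.1 by ring]

end AlignedBlocks

section Frequency

open Filter Topology Finset

theorem tendsto_of_sum_eq_one_of_eventually_le {ι : Type*} [Fintype ι] {c : ι → ℕ → ℝ}
    (hsum : ∀ᶠ N in atTop, ∑ i, c i N = 1)
    (hle : ∀ i, ∀ a > (Fintype.card ι : ℝ)⁻¹, ∀ᶠ N in atTop, c i N ≤ a) (i : ι) :
    Tendsto (c i) atTop (𝓝 (Fintype.card ι : ℝ)⁻¹) := by
  classical
  set m : ℝ := (Fintype.card ι : ℝ)
  have hm : (1 : ℝ) ≤ m := Nat.one_le_cast.2 (Fintype.card_pos_iff.2 ⟨i⟩)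
  refine tendsto_order.2 ⟨fun a ha => ?_, fun a ha => ?_⟩
  · set d := m⁻¹ - a
    have hd : 0 < d / m := div_pos (sub_pos.2 ha) (by positivity)
    have hall : ∀ᶠ N in atTop, ∀ j, c j N ≤ m⁻¹ + d / m :=
      eventually_all.2 fun j => hle j _ (lt_add_of_pos_right _ hd)
    filter_upwards [hsum, hall] with N hN hN'
    have hrest : ∑ j ∈ univ.erase i, c j N ≤ (m - 1) * (m⁻¹ + d / m) := by
      calc _ ≤ ∑ j ∈ univ.erase i, (m⁻¹ + d / m) := sum_le_sum fun j _ => hN' j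
        _ = _ := by
          rw [sum_const, card_erase_of_mem (mem_univ i), card_univ, nsmul_eq_mul,
            Nat.cast_sub (Fintype.card_pos_iff.2 ⟨i⟩), Nat.cast_one]
    have hsplit := add_sum_erase univ (fun j => c j N) (mem_univ i)
    have hexpand : (m - 1) * (m⁻¹ + d / m) = 1 - m⁻¹ + d - d / m := by
      field_simp
      ring
    linarith
  · filter_upwards [hle i ((m⁻¹ + a) / 2) (by linarith)] with N hN
    linarith

theorem exists_frequently_lt_alignedCount {α : ℕ → Bool} (hα : ¬ IsNormal α) :
    ∃ k, 1 ≤ k ∧ ∃ r : List.Vector Bool k, ∃ a > ((2 : ℝ) ^ k)⁻¹,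
      ∃ᶠ N in atTop, a * N < alignedCount α k r.toList N := by
  simp only [IsNormal, not_forall] at hα
  obtain ⟨k, hk, r, hr, hnot⟩ := hα
  refine ⟨k, hk, ?_⟩
  by_contra! h
  apply hnot
  have := tendsto_of_sum_eq_one_of_eventually_le
    (c := fun (v : List.Vector Bool k) N => (alignedCount α k v.toList N : ℝ) / N) ?_ ?_
    ⟨r, hr⟩
  · rwa [card_vector, Fintype.card_bool, Nat.cast_pow, Nat.cast_ofNat, ← inv_pow] at this
  · filter_upwards [eventually_gt_atTop 0] with N hN
    rw [← sum_div, ← Nat.cast_sum, sum_alignedCount, div_self (by positivity)]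
  · intro v a ha
    rw [card_vector, Fintype.card_bool, Nat.cast_pow, Nat.cast_ofNat] at ha
    filter_upwards [h v a ha, eventually_gt_atTop 0] with N hN hN0
    rw [div_le_iff₀ (by positivity)]
    exact hN

theorem alignedCount_le (α : ℕ → Bool) (k : ℕ) (r : List Bool) (N : ℕ) :
    alignedCount α k r N ≤ N :=
  (card_filter_le _ _).trans (card_range N).le

theorem alignedCount_mono (α : ℕ → Bool) (k : ℕ) (r : List Bool) :
    Monotone (alignedCount α k r) :=
  fun _ _ h => card_le_card (filter_subset_filter _ (range_subset_range.2 h))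

theorem lt_one_of_frequently_mul_lt_alignedCount {α : ℕ → Bool} {k : ℕ} {r : List Bool}
    {a : ℝ} (h : ∃ᶠ N in atTop, a * N < alignedCount α k r N) : a < 1 := by
  obtain ⟨N, hN⟩ := h.exists
  have hle : (alignedCount α k r N : ℝ) ≤ N := by exact_mod_cast alignedCount_le α k r N
  by_contra! ha
  nlinarith [mul_le_mul_of_nonneg_right ha (Nat.cast_nonneg (α := ℝ) N)]

theorem Monotone.frequently_mul_le_comp_mul {g : ℕ → ℝ} (hg : Monotone g) {a β : ℝ}
    (hβ : 0 ≤ β) (hβa : β < a) {t : ℕ} (ht : 0 < t) (h : ∃ᶠ N in atTop, a * N ≤ g N) :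
    ∃ᶠ N in atTop, β * (N * t : ℕ) ≤ g (N * t) := by
  have hφ : Tendsto (fun N₀ => N₀ / t + 1) atTop atTop :=
    tendsto_atTop_mono (fun _ => Nat.le_succ _) (Nat.tendsto_div_const_atTop ht.ne')
  refine hφ.frequently ?_
  have hlarge : ∀ᶠ N₀ : ℕ in atTop, a * t ≤ (a - β) * N₀ :=
    (tendsto_natCast_atTop_atTop.const_mul_atTop (sub_pos.2 hβa)).eventually_ge_atTop _
  refine (h.and_eventually hlarge).mono fun N₀ ⟨hN₀, hlarge⟩ => ?_
  have hlt : N₀ < (N₀ / t + 1) * t := by rw [Nat.add_mul, one_mul]; exact Nat.lt_div_mul_add ht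
  have hle : (N₀ / t + 1) * t ≤ N₀ + t := by
    rw [Nat.add_mul, one_mul]; exact Nat.add_le_add_right (Nat.div_mul_le_self _ _) t
  have hlt' : (N₀ : ℝ) < ((N₀ / t + 1) * t : ℕ) := by exact_mod_cast hlt
  have hle' : (((N₀ / t + 1) * t : ℕ) : ℝ) ≤ N₀ + t := by exact_mod_cast hle
  calc β * ((N₀ / t + 1) * t : ℕ) ≤ a * N₀ := by
        nlinarith [mul_le_mul_of_nonneg_left hle' (hβ.trans hβa.le),
          mul_le_mul_of_nonneg_left hlt'.le (sub_nonneg.2 hβa.le)]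
    _ ≤ g N₀ := hN₀
    _ ≤ g ((N₀ / t + 1) * t) := hg hlt.le

end Frequency

section Entropy

open Real Filter Topology

theorem qaryEntropy_one_sub_inv {q : ℕ} (hq : 2 ≤ q) : qaryEntropy q (1 - 1 / q) = log q := by
  have hq' : (2 : ℝ) ≤ q := by exact_mod_cast hq
  have hq1 : (q : ℝ) - 1 ≠ 0 := by linarith
  rw [qaryEntropy, binEntropy, sub_sub_cancel, Int.cast_sub, Int.cast_natCast, Int.cast_one,
    show 1 - 1 / (q : ℝ) = (q - 1) / q by field_simp, inv_div, one_div, inv_inv,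
    log_div (by positivity) hq1]
  field_simp
  ring

/-- The entropy, in bits, of the distribution on `k`-bit blocks that gives weight `β` to one
block and equal weight to the others. -/
noncomputable def blockEntropy (k : ℕ) (β : ℝ) : ℝ :=
  β * logb 2 β⁻¹ + (1 - β) * logb 2 ((1 - β) / (2 ^ k - 1))⁻¹

theorem blockEntropy_lt {k : ℕ} (hk : 1 ≤ k) {β : ℝ} (hβk : ((2 : ℝ) ^ k)⁻¹ < β)
    (hβ1 : β < 1) :
    blockEntropy k β < k := by
  have hq : 2 ≤ 2 ^ k := Nat.le_self_pow (by omega) 2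
  have hM : (2 : ℝ) ≤ 2 ^ k := by exact_mod_cast hq
  have hβ0 : 0 < β := lt_trans (by positivity) hβk
  have hlt : qaryEntropy (2 ^ k) (1 - β) < qaryEntropy (2 ^ k) (1 - 1 / (2 ^ k : ℕ)) := by
    have hinv : 1 / ((2 ^ k : ℕ) : ℝ) = ((2 : ℝ) ^ k)⁻¹ := by push_cast; exact one_div _
    refine qaryEntropy_strictMonoOn hq ⟨by linarith, ?_⟩ ⟨?_, le_rfl⟩ ?_ <;> rw [hinv]
    · linarith
    · linarith [inv_le_one_of_one_le₀ (one_le_two.trans hM)]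
    · linarith
  have hγ : log ((1 - β) / (2 ^ k - 1))⁻¹ = log (2 ^ k - 1) + log (1 - β)⁻¹ := by
    rw [inv_div, log_div (by linarith) (by linarith), log_inv]
    ring
  have heq : qaryEntropy (2 ^ k) (1 - β) = blockEntropy k β * log 2 := by
    simp only [blockEntropy, logb, qaryEntropy, binEntropy, hγ, sub_sub_cancel]
    push_cast
    field_simp
    ring
  rw [qaryEntropy_one_sub_inv hq, heq, Nat.cast_pow, Nat.cast_ofNat, log_pow] at hlt
  exact lt_of_mul_lt_mul_right hlt (log_nonneg one_le_two)

theorem exists_add_three_le_two_pow_mul {ε : ℝ} (hε : 0 < ε) :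
    ∃ W : ℕ, (W : ℝ) + 3 ≤ 2 ^ W * ε := by
  have h : Tendsto (fun W : ℕ => ((W : ℝ) + 3) / 2 ^ W) atTop (𝓝 0) := by
    simpa [add_div] using (tendsto_pow_const_div_const_pow_of_one_lt 1 one_lt_two).add
      (tendsto_const_nhds.div_atTop (tendsto_pow_atTop_atTop_of_one_lt one_lt_two))
  obtain ⟨W, hW⟩ := (h.eventually (gt_mem_nhds hε)).exists
  refine ⟨W, ?_⟩
  rw [div_lt_iff₀ (by positivity)] at hW
  linarith

end Entropy

section Compression

open Finset Real

variable (α : ℕ → Bool) {k : ℕ} (t : ℕ) (r : List.Vector Bool k)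

theorem length_flatMap_classCode_superBlock_le (hk : 1 ≤ k) {β : ℝ}
    (hβk : ((2 : ℝ) ^ k)⁻¹ < β) (hβ1 : β < 1) (w N : ℕ)
    (hN : β * (N * t : ℕ) ≤ alignedCount α k r.toList (N * t)) :
    (((List.ofFn fun i : Fin N => superBlock α k t i).flatMap
      (classCode (blockCount r) w)).length : ℝ) ≤ N * (w + 1 + t * blockEntropy k β) := by
  have hM : (2 : ℝ) ≤ 2 ^ k := by exact_mod_cast Nat.le_self_pow (by omega) 2
  have hβ : 0 < β := lt_trans (by positivity) hβk
  set γ := (1 - β) / (2 ^ k - 1)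
  have hγ : 0 < γ := div_pos (by linarith) (by linarith)
  have hγβ : γ ≤ β := by
    rw [div_le_iff₀ (by linarith)]
    nlinarith [(inv_lt_iff_one_lt_mul₀' (by positivity : (0 : ℝ) < 2 ^ k)).1 hβk]
  have hsum : β + ((Fintype.card (List.Vector Bool k) : ℝ) - 1) * γ = 1 := by
    rw [card_vector, Fintype.card_bool, Nat.cast_pow, Nat.cast_ofNat,
      mul_div_cancel₀ _ (by linarith)]
    ring
  set L₁ := logb 2 β⁻¹
  set L₂ := logb 2 γ⁻¹
  have hL : L₁ ≤ L₂ := logb_le_logb_of_le one_lt_two (by positivity) (inv_anti₀ hγ hγβ)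
  have hJ : ∑ i : Fin N, (blockCount r (superBlock α k t i) : ℝ) =
      alignedCount α k r.toList (N * t) := by
    exact_mod_cast sum_blockCount_superBlock α k t r N
  rw [List.length_flatMap, List.map_ofFn, List.sum_ofFn, Nat.cast_sum]
  calc ∑ i : Fin N, ((classCode (blockCount r) w (superBlock α k t i)).length : ℝ)
      ≤ ∑ i : Fin N, (w + 1 + t * L₂ + blockCount r (superBlock α k t i) * (L₁ - L₂)) :=
        sum_le_sum fun i _ => by
          linarith [length_classCode_blockCount_le hβ hγ hsum r w (superBlock α k t i)]
    _ = N * (w + 1 + t * L₂) + alignedCount α k r.toList (N * t) * (L₁ - L₂) := by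
        rw [sum_add_distrib, sum_const, card_univ, Fintype.card_fin, nsmul_eq_mul, ← sum_mul, hJ]
    _ ≤ N * (w + 1 + t * L₂) + β * (N * t : ℕ) * (L₁ - L₂) := by
        have := mul_le_mul_of_nonpos_right hN (sub_nonpos.2 hL)
        linarith
    _ = N * (w + 1 + t * blockEntropy k β) := by
        simp only [blockEntropy, L₁, L₂, γ]
        push_cast
        ring

theorem length_flatMap_classCode_superBlock_le_mul (hk : 1 ≤ k) {β : ℝ}
    (hβk : ((2 : ℝ) ^ k)⁻¹ < β) (hβ1 : β < 1) {W : ℕ}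
    (hW : (W : ℝ) + 3 ≤ 2 ^ W * (k - blockEntropy k β)) (N : ℕ)
    (hN : β * (N * 2 ^ W : ℕ) ≤ alignedCount α k r.toList (N * 2 ^ W)) :
    ((List.ofFn fun i : Fin N => superBlock α k (2 ^ W) i).flatMap
      (classCode (blockCount r) (W + 1))).length ≤ N * (2 ^ W * k - 1) := by
  have hlen := length_flatMap_classCode_superBlock_le α (2 ^ W) r hk hβk hβ1 (W + 1) N hN
  have hbound :
      ((W + 1 : ℕ) : ℝ) + 1 + ((2 ^ W : ℕ) : ℝ) * blockEntropy k β ≤ 2 ^ W * k - 1 := by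
    push_cast
    linarith
  have hpos : 1 ≤ 2 ^ W * k := Nat.mul_pos (Nat.two_pow_pos W) hk
  rw [← Nat.cast_le (α := ℝ), Nat.cast_mul, Nat.cast_sub hpos]
  push_cast at hbound hlen ⊢
  exact hlen.trans (mul_le_mul_of_nonneg_left hbound (Nat.cast_nonneg N))

end Compression

theorem mul_autK_le_of_mul_length_le {R : List Bool → List Bool → Prop} {p x : List Bool}
    (hR : R p x) {a b n : ℕ} (h : b * p.length ≤ a * n) :
    (b : ℕ∞) * autK R x ≤ (a * n : ℕ∞) :=
  calc (b : ℕ∞) * autK R x ≤ b * p.length := by gcongr; exact sInf_le ⟨p, hR, rfl⟩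
    _ ≤ a * n := by exact_mod_cast h

/-- A non-normal sequence is compressible by a finite automaton: there are a
description mode `R` and a rational `a/b < 1` with `K_R(α↾n) ≤ (a/b)·n`
for infinitely many `n`. -/
theorem compressible_of_not_normal (α : ℕ → Bool) (hα : ¬ IsNormal α) :
    ∃ R : List Bool → List Bool → Prop, IsDescriptionMode R ∧
      ∃ a b : ℕ, a < b ∧
        ∃ᶠ n in Filter.atTop, (b : ℕ∞) * autK R (prefixOf α n) ≤ (a * n : ℕ∞) := by
  obtain ⟨k, hk, r, a, ha, hfreq⟩ := exists_frequently_lt_alignedCount hα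
  have ha1 := lt_one_of_frequently_mul_lt_alignedCount hfreq
  obtain ⟨β, hβk, hβa⟩ := exists_between ha
  obtain ⟨W, hW⟩ :=
    exists_add_three_le_two_pow_mul (sub_pos.2 (blockEntropy_lt hk hβk (by linarith)))
  have htk : 0 < 2 ^ W * k := Nat.mul_pos (Nat.two_pow_pos W) hk
  obtain ⟨R, hRaut, hRbdd, hR⟩ := exists_isAutomatic_boundedValued_of_prefixFree
    (classCode (blockCount r) (W + 1)) (concatBlocks (t := 2 ^ W))
    (fun _ _ => classCode_prefixFree _ _ fun V =>
      (blockCount_le r V).trans_lt (Nat.pow_lt_pow_right one_lt_two W.lt_succ_self))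
    (fun V => List.ne_nil_of_length_pos (by rw [length_classCode]; omega))
  refine ⟨R, ⟨hRaut, hRbdd⟩, 2 ^ W * k - 1, 2 ^ W * k, Nat.sub_lt htk one_pos, ?_⟩
  have hfreq_mul :=
    (Nat.mono_cast.comp (alignedCount_mono α k r.toList)).frequently_mul_le_comp_mul
      (lt_trans (by positivity) hβk).le hβa (Nat.two_pow_pos W) (hfreq.mono fun _ h => h.le)
  have hmul : Filter.Tendsto (fun N => N * (2 ^ W * k)) Filter.atTop Filter.atTop :=
    Filter.tendsto_atTop_atTop_of_monotone (fun _ _ h => Nat.mul_le_mul_right _ h)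
      fun n => ⟨n, Nat.le_mul_of_pos_right n htk⟩
  refine hmul.frequently (hfreq_mul.mono fun N hN => ?_)
  rw [prefixOf_eq_flatMap_superBlock]
  refine mul_autK_le_of_mul_length_le (hR _) ?_
  calc 2 ^ W * k * _ ≤ 2 ^ W * k * (N * (2 ^ W * k - 1)) := Nat.mul_le_mul_left _
        (length_flatMap_classCode_superBlock_le_mul α r hk hβk (by linarith) hW N hN)
    _ = (2 ^ W * k - 1) * (N * (2 ^ W * k)) := by ring
end
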